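/- (Lemma 1.) Let Xo, U, Z be nonempty finite types, let p be a strictly positive probability mass function on Xo × Xo × U, whose coordinates represent the triple (X_{t+1}, X_t, U_t), and let Enc : Xo → Z be a (deterministic) encoder. Consider restricted prediction models of the form q_ψ(x'|x,u) = ψ1(x')·ψ2(Enc(x'), Enc(x), u) / Σ_{x''} ψ1(x'')·ψ2(Enc(x''), Enc(x), u), with ψ1 : Xo → ℝ≥0 and ψ2 : Z × Z × U → ℝ≥0 such that the normalizer is positive for every (x,u). Then the predictive suboptimality, i.e., the infimum over all such models of Σ_{x,u} p_{XU}(x,u) · KL(p(·|x,u) ‖ q_ψ(·|x,u)), is at most the mutual information gap I(X_{t+1} ; (X_t, U_t)) − I(Enc(X_{t+1}) ; (Enc(X_t), U_t)). -/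

import Mathlib

/-!
Statement 3 (Lemma 1): For a strictly positive pmf `p` on `Xo × Xo × U` whose
coordinates represent `(X_{t+1}, X_t, U_t)` and a deterministic encoder
`Enc : Xo → Z`, the predictive suboptimality — the infimum over restricted
prediction models `q_ψ(x'|x,u) ∝ ψ1(x')·ψ2(Enc x', Enc x, u)` of
`∑_{x,u} p_{XU}(x,u) · KL(p(·|x,u) ‖ q_ψ(·|x,u))` — is at most the mutual
information gap `I(X_{t+1};(X_t,U_t)) − I(Enc(X_{t+1});(Enc(X_t),U_t))`.
-/

open Finset
open scoped Classical

noncomputable section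

/-- Mutual information between the two coordinates of a pmf on a product of
finite types (terms with zero mass contribute `0`, since `Real.log 0 = 0`). -/
def mi {α β : Type*} [Fintype α] [Fintype β] (q : α × β → ℝ) : ℝ :=
  ∑ a, ∑ b, q (a, b) * Real.log (q (a, b) / ((∑ b', q (a, b')) * (∑ a', q (a', b))))

variable {Xo U Z : Type*} [Fintype Xo] [Fintype U] [Fintype Z]

/-- Marginal of the current state-action pair `(x, u)`;
the pmf `p` is on `Xo × Xo × U` with coordinates `(x_{t+1}, x_t, u_t)`. -/
def margXU (p : Xo × Xo × U → ℝ) (xu : Xo × U) : ℝ := ∑ x', p (x', xu)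

/-- Conditional pmf of the next observation `x'` given `(x, u)`. -/
def condNext (p : Xo × Xo × U → ℝ) (x' : Xo) (xu : Xo × U) : ℝ :=
  p (x', xu) / margXU p xu

/-- Pushforward pmf of `p` under `(x', x, u) ↦ (Enc x', Enc x, u)`. -/
def pushEnc (p : Xo × Xo × U → ℝ) (Enc : Xo → Z) : Z × Z × U → ℝ :=
  fun zzu => ∑ x', ∑ x, if Enc x' = zzu.1 ∧ Enc x = zzu.2.1 then p (x', x, zzu.2.2) else 0

/-- The restricted prediction model `q_ψ(x'|x,u)` induced by `ψ1, ψ2`. -/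
def qModel (Enc : Xo → Z) (ψ1 : Xo → ℝ) (ψ2 : Z × Z × U → ℝ)
    (x' : Xo) (xu : Xo × U) : ℝ :=
  ψ1 x' * ψ2 (Enc x', Enc xu.1, xu.2) / ∑ x'', ψ1 x'' * ψ2 (Enc x'', Enc xu.1, xu.2)

/-- Predictive loss `∑_{x,u} p_{XU}(x,u) · KL(p(·|x,u) ‖ q(·|x,u))` of a
conditional model `q x' (x,u) = q(x'|x,u)` under `p`. -/
def predLoss (p : Xo × Xo × U → ℝ) (q : Xo → Xo × U → ℝ) : ℝ :=
  ∑ xu : Xo × U, margXU p xu *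
    ∑ x', condNext p x' xu * Real.log (condNext p x' xu / q x' xu)

/-!
Take `ψ1` to be the law of `X_{t+1}` and `ψ2 = P(z', z, u) / (P(z') P(z, u))`, where `P` is the law
of the encoded triple. This model has normalizer `1`, and `log (p(x' | x, u) / q_ψ(x' | x, u))` is
the pointwise mutual information of `(x', (x, u))` minus that of its encoding, so its loss is
exactly the mutual information gap. The set of losses is bounded below because
`-q ≤ c log (c / q)` for all `c, q ≥ 0`, even under the convention `log 0 = 0`.
-/

section PointwiseMutualInformation

variable {α β : Type*} {q : α × β → ℝ}

def fstMarg [Fintype β] (q : α × β → ℝ) (a : α) : ℝ := ∑ b, q (a, b)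

def sndMarg [Fintype α] (q : α × β → ℝ) (b : β) : ℝ := ∑ a, q (a, b)

def pmiRatio [Fintype α] [Fintype β] (q : α × β → ℝ) (ab : α × β) : ℝ :=
  q ab / (fstMarg q ab.1 * sndMarg q ab.2)

lemma mi_eq_sum_mul_log_pmiRatio [Fintype α] [Fintype β] (q : α × β → ℝ) :
    mi q = ∑ ab, q ab * Real.log (pmiRatio q ab) := by
  rw [Fintype.sum_prod_type]
  rfl

lemma le_fstMarg [Fintype β] (hq : ∀ ab, 0 ≤ q ab) (a : α) (b : β) : q (a, b) ≤ fstMarg q a :=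
  single_le_sum (fun b _ => hq (a, b)) (mem_univ b)

lemma le_sndMarg [Fintype α] (hq : ∀ ab, 0 ≤ q ab) (a : α) (b : β) : q (a, b) ≤ sndMarg q b :=
  single_le_sum (fun a _ => hq (a, b)) (mem_univ a)

lemma fstMarg_nonneg [Fintype β] (hq : ∀ ab, 0 ≤ q ab) (a : α) : 0 ≤ fstMarg q a :=
  sum_nonneg fun b _ => hq (a, b)

lemma pmiRatio_nonneg [Fintype α] [Fintype β] (hq : ∀ ab, 0 ≤ q ab) (ab : α × β) :
    0 ≤ pmiRatio q ab :=
  div_nonneg (hq ab) (mul_nonneg (fstMarg_nonneg hq _) (sum_nonneg fun a _ => hq (a, ab.2)))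

lemma pmiRatio_pos [Fintype α] [Fintype β] (hq : ∀ ab, 0 ≤ q ab) {ab : α × β} (h : 0 < q ab) :
    0 < pmiRatio q ab :=
  div_pos h (mul_pos (h.trans_le (le_fstMarg hq ab.1 ab.2)) (h.trans_le (le_sndMarg hq ab.1 ab.2)))

lemma sum_fstMarg_mul_pmiRatio [Fintype α] [Fintype β] (hq : ∀ ab, 0 ≤ q ab) {b : β}
    (hb : 0 < sndMarg q b) :
    ∑ a, fstMarg q a * pmiRatio q (a, b) = 1 := by
  have hterm : ∀ a, fstMarg q a * pmiRatio q (a, b) = q (a, b) / sndMarg q b := by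
    intro a
    rcases (fstMarg_nonneg hq a).eq_or_lt with h | h
    · have hab : q (a, b) = 0 := le_antisymm (h ▸ le_fstMarg hq a b) (hq _)
      simp [← h, hab]
    · rw [pmiRatio, mul_div_assoc', mul_div_mul_left _ _ h.ne']
  rw [sum_congr rfl fun a _ => hterm a, ← sum_div]
  exact div_self hb.ne'

end PointwiseMutualInformation

section EncodedLaw

variable {p : Xo × Xo × U → ℝ} {Enc : Xo → Z}

omit [Fintype Z] in
lemma pushEnc_eq_sum_fiber (p : Xo × Xo × U → ℝ) (Enc : Xo → Z) (s : Z × Z × U) :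
    pushEnc p Enc s = ∑ t with (Enc t.1, Enc t.2.1, t.2.2) = s, p t := by
  obtain ⟨z', z, u⟩ := s
  simp only [pushEnc, sum_filter, Fintype.sum_prod_type, Prod.mk.injEq]
  refine sum_congr rfl fun x' _ => sum_congr rfl fun x _ => ?_
  simp only [← and_assoc, ite_and, sum_ite_irrel, sum_ite_eq', mem_univ, if_true, sum_const_zero]

lemma sum_pushEnc_mul (p : Xo × Xo × U → ℝ) (Enc : Xo → Z) (g : Z × Z × U → ℝ) :
    ∑ s, pushEnc p Enc s * g s = ∑ t, p t * g (Enc t.1, Enc t.2.1, t.2.2) := by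
  simp only [pushEnc_eq_sum_fiber, sum_mul]
  rw [← sum_fiberwise univ (fun t : Xo × Xo × U => (Enc t.1, Enc t.2.1, t.2.2))]
  refine sum_congr rfl fun s _ => sum_congr rfl fun t ht => ?_
  rw [(mem_filter.mp ht).2]

omit [Fintype Z] in
lemma le_pushEnc (hp : ∀ t, 0 ≤ p t) (t : Xo × Xo × U) :
    p t ≤ pushEnc p Enc (Enc t.1, Enc t.2.1, t.2.2) := by
  rw [pushEnc_eq_sum_fiber]
  exact single_le_sum (fun t _ => hp t) (mem_filter.mpr ⟨mem_univ t, rfl⟩)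

omit [Fintype Z] in
lemma pushEnc_nonneg (hp : ∀ t, 0 ≤ p t) (s : Z × Z × U) : 0 ≤ pushEnc p Enc s := by
  rw [pushEnc_eq_sum_fiber]
  exact sum_nonneg fun t _ => hp t

lemma sum_fstMarg_pushEnc_mul (p : Xo × Xo × U → ℝ) (Enc : Xo → Z) (h : Z → ℝ) :
    ∑ z', fstMarg (pushEnc p Enc) z' * h z' = ∑ x', fstMarg p x' * h (Enc x') := by
  simpa only [Fintype.sum_prod_type, fstMarg, sum_mul] using sum_pushEnc_mul p Enc fun s => h s.1

end EncodedLaw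

section OptimalModel

variable {p : Xo × Xo × U → ℝ} {Enc : Xo → Z}

lemma sum_fstMarg_mul_pmiRatio_pushEnc (hp : ∀ t, 0 < p t) (xu : Xo × U) :
    ∑ x'', fstMarg p x'' * pmiRatio (pushEnc p Enc) (Enc x'', Enc xu.1, xu.2) = 1 := by
  have hp' : ∀ t, 0 ≤ p t := fun t => (hp t).le
  rw [← sum_fstMarg_pushEnc_mul p Enc fun z' => pmiRatio (pushEnc p Enc) (z', Enc xu.1, xu.2)]
  exact sum_fstMarg_mul_pmiRatio (pushEnc_nonneg hp')
    ((hp (xu.1, xu)).trans_le ((le_pushEnc hp' _).trans (le_sndMarg (pushEnc_nonneg hp') _ _)))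

lemma qModel_fstMarg_pmiRatio (hp : ∀ t, 0 < p t) (x' : Xo) (xu : Xo × U) :
    qModel Enc (fstMarg p) (pmiRatio (pushEnc p Enc)) x' xu
      = fstMarg p x' * pmiRatio (pushEnc p Enc) (Enc x', Enc xu.1, xu.2) := by
  rw [qModel, sum_fstMarg_mul_pmiRatio_pushEnc hp, div_one]

lemma predLoss_qModel_fstMarg_pmiRatio (hp : ∀ t, 0 < p t) :
    predLoss p (qModel Enc (fstMarg p) (pmiRatio (pushEnc p Enc)))
      = mi p - mi (pushEnc p Enc) := by
  have hp' : ∀ t, 0 ≤ p t := fun t => (hp t).le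
  set P := pushEnc p Enc
  have hterm : ∀ x' xu, margXU p xu * (condNext p x' xu *
      Real.log (condNext p x' xu / qModel Enc (fstMarg p) (pmiRatio P) x' xu))
      = p (x', xu) * (Real.log (pmiRatio p (x', xu))
        - Real.log (pmiRatio P (Enc x', Enc xu.1, xu.2))) := by
    intro x' xu
    have hm : 0 < margXU p xu := (hp _).trans_le (le_sndMarg hp' x' xu)
    have hr : 0 < pmiRatio P (Enc x', Enc xu.1, xu.2) :=
      pmiRatio_pos (pushEnc_nonneg hp') ((hp (x', xu)).trans_le (le_pushEnc hp' _))
    have hratio : condNext p x' xu / qModel Enc (fstMarg p) (pmiRatio P) x' xu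
        = pmiRatio p (x', xu) / pmiRatio P (Enc x', Enc xu.1, xu.2) := by
      rw [qModel_fstMarg_pmiRatio hp, condNext, pmiRatio]
      change _ = p (x', xu) / (fstMarg p x' * margXU p xu) / _
      ring
    rw [hratio, Real.log_div (pmiRatio_pos hp' (hp _)).ne' hr.ne', condNext, ← mul_assoc,
      mul_div_cancel₀ _ hm.ne']
  have hsplit : predLoss p (qModel Enc (fstMarg p) (pmiRatio P)) = ∑ t, p t *
      (Real.log (pmiRatio p t) - Real.log (pmiRatio P (Enc t.1, Enc t.2.1, t.2.2))) := by
    rw [Fintype.sum_prod_type, sum_comm]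
    simp only [predLoss, mul_sum, hterm]
  rw [hsplit, mi_eq_sum_mul_log_pmiRatio, mi_eq_sum_mul_log_pmiRatio, sum_pushEnc_mul,
    ← sum_sub_distrib]
  simp only [mul_sub]

end OptimalModel

section LowerBound

variable {p : Xo × Xo × U → ℝ} {Enc : Xo → Z} {ψ1 : Xo → ℝ} {ψ2 : Z × Z × U → ℝ}

lemma neg_le_mul_log_div {c q : ℝ} (hc : 0 ≤ c) (hq : 0 ≤ q) : -q ≤ c * Real.log (c / q) := by
  rcases hc.eq_or_lt with rfl | hc
  · simpa using hq
  · calc -q = c * -(c / q)⁻¹ := by field_simp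
      _ ≤ c * Real.log (c / q) := by gcongr; exact Real.neg_inv_le_log (div_nonneg hc.le hq)

omit [Fintype U] [Fintype Z] in
lemma qModel_nonneg (h1 : ∀ x', 0 ≤ ψ1 x') (h2 : ∀ s, 0 ≤ ψ2 s)
    (hN : ∀ xu : Xo × U, 0 < ∑ x'', ψ1 x'' * ψ2 (Enc x'', Enc xu.1, xu.2))
    (x' : Xo) (xu : Xo × U) : 0 ≤ qModel Enc ψ1 ψ2 x' xu :=
  div_nonneg (mul_nonneg (h1 _) (h2 _)) (hN xu).le

omit [Fintype U] [Fintype Z] in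
lemma sum_qModel {xu : Xo × U} (hN : 0 < ∑ x'', ψ1 x'' * ψ2 (Enc x'', Enc xu.1, xu.2)) :
    ∑ x', qModel Enc ψ1 ψ2 x' xu = 1 := by
  simp only [qModel]
  rw [← sum_div, div_self hN.ne']

lemma neg_sum_margXU_le_predLoss (hp : ∀ t, 0 ≤ p t) {q : Xo → Xo × U → ℝ}
    (hq : ∀ x' xu, 0 ≤ q x' xu) (hq1 : ∀ xu, ∑ x', q x' xu = 1) :
    -∑ xu, margXU p xu ≤ predLoss p q := by
  rw [predLoss, ← sum_neg_distrib]
  refine sum_le_sum fun xu _ => ?_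
  have hm : 0 ≤ margXU p xu := sum_nonneg fun x' _ => hp (x', xu)
  calc -margXU p xu = margXU p xu * -∑ x', q x' xu := by rw [hq1]; ring
    _ ≤ _ := by
      rw [← sum_neg_distrib]
      gcongr with x'
      exact neg_le_mul_log_div (div_nonneg (hp _) hm) (hq x' xu)

end LowerBound

theorem lemma1_predictive_suboptimality_le_mi_gap_general
    (p : Xo × Xo × U → ℝ) (hpos : ∀ t, 0 < p t)
    (Enc : Xo → Z) :
    sInf {ℓ : ℝ | ∃ ψ1 : Xo → ℝ, ∃ ψ2 : Z × Z × U → ℝ,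
        (∀ x', 0 ≤ ψ1 x') ∧ (∀ zzu, 0 ≤ ψ2 zzu) ∧
        (∀ xu : Xo × U, 0 < ∑ x'', ψ1 x'' * ψ2 (Enc x'', Enc xu.1, xu.2)) ∧
        ℓ = predLoss p (qModel Enc ψ1 ψ2)}
      ≤ mi p - mi (pushEnc p Enc) := by
  have hp : ∀ t, 0 ≤ p t := fun t => (hpos t).le
  rw [← predLoss_qModel_fstMarg_pmiRatio hpos]
  refine csInf_le ⟨-∑ xu : Xo × U, margXU p xu, ?_⟩ ⟨fstMarg p, pmiRatio (pushEnc p Enc),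
    fstMarg_nonneg hp, pmiRatio_nonneg (pushEnc_nonneg hp),
    fun xu => by rw [sum_fstMarg_mul_pmiRatio_pushEnc hpos]; exact one_pos, rfl⟩
  rintro _ ⟨ψ1, ψ2, hψ1, hψ2, hN, rfl⟩
  exact neg_sum_margXU_le_predLoss hp (qModel_nonneg hψ1 hψ2 hN) fun xu => sum_qModel (hN xu)

theorem lemma1_predictive_suboptimality_le_mi_gap
    [Nonempty Xo] [Nonempty U] [Nonempty Z]
    (p : Xo × Xo × U → ℝ) (hpos : ∀ t, 0 < p t) (hsum : ∑ t, p t = 1)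
    (Enc : Xo → Z) :
    sInf {ℓ : ℝ | ∃ ψ1 : Xo → ℝ, ∃ ψ2 : Z × Z × U → ℝ,
        (∀ x', 0 ≤ ψ1 x') ∧ (∀ zzu, 0 ≤ ψ2 zzu) ∧
        (∀ xu : Xo × U, 0 < ∑ x'', ψ1 x'' * ψ2 (Enc x'', Enc xu.1, xu.2)) ∧
        ℓ = predLoss p (qModel Enc ψ1 ψ2)}
      ≤ mi p - mi (pushEnc p Enc) :=
  lemma1_predictive_suboptimality_le_mi_gap_general p hpos Enc

end
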